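/- Let P be the Petersen graph and let u–v–w be a path of length 2 in P (so u and w are distinct neighbours of v). Let a1, a2 be the neighbours of u other than v, let b1, b2 be the neighbours of w other than v, and let t be the third neighbour of v. Let N be the graph obtained from P − {u,v,w} by adding five new pendant vertices a1*, a2*, b1*, b2*, t* together with the edges a1a1*, a2a2*, b1b1*, b2b2*, tt*. Then N admits a proper 3-edge-colouring, and every proper 3-edge-colouring c of N with colours the three nonzero elements of Z2×Z2 satisfies exactly one of: (i) c(a1a1*) = c(a2a2*), c(b1b1*) ≠ c(b2b2*), and c(tt*) = c(b1b1*)+c(b2b2*); or (ii) c(b1b1*) = c(b2b2*), c(a1a1*) ≠ c(a2a2*), and c(tt*) = c(a1a1*)+c(a2a2*). -/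

import Mathlib

/-- A proper 3-edge-colouring of a simple graph: a colour for every unordered pair,
such that distinct edges of the graph sharing a vertex receive distinct colours. -/
def IsProper3EdgeColoring {V : Type*} (G : SimpleGraph V) (c : Sym2 V → Fin 3) : Prop :=
  ∀ e₁ e₂ : Sym2 V, e₁ ∈ G.edgeSet → e₂ ∈ G.edgeSet → e₁ ≠ e₂ →
    (∃ v, v ∈ e₁ ∧ v ∈ e₂) → c e₁ ≠ c e₂

/-- A graph admits a proper 3-edge-colouring. -/
def ThreeEdgeColorable {V : Type*} (G : SimpleGraph V) : Prop :=
  ∃ c : Sym2 V → Fin 3, IsProper3EdgeColoring G c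

/-- The vertices of the Petersen graph: the 2-element subsets of a 5-element set. -/
abbrev PetersenVert : Type := {s : Finset (Fin 5) // s.card = 2}

/-- The Petersen graph, as the Kneser graph of 2-element subsets of a 5-element set:
two subsets are adjacent when they are disjoint. -/
def petersen : SimpleGraph PetersenVert where
  Adj a b := Disjoint (a : Finset (Fin 5)) (b : Finset (Fin 5))
  symm := ⟨fun _ _ h => h.symm⟩
  loopless := by
    constructor
    intro a h
    have := disjoint_self.mp h
    have h2 := a.2
    rw [this] at h2
    simp at h2

/-- A proper 3-edge-colouring with colours the three nonzero elements of `Z2 × Z2`: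
every edge gets a nonzero colour and distinct edges sharing a vertex get distinct
colours. -/
def IsProperK4EdgeColoring {V : Type*} (G : SimpleGraph V)
    (c : Sym2 V → ZMod 2 × ZMod 2) : Prop :=
  (∀ e ∈ G.edgeSet, c e ≠ 0) ∧
  ∀ e₁ e₂ : Sym2 V, e₁ ∈ G.edgeSet → e₂ ∈ G.edgeSet → e₁ ≠ e₂ →
    (∃ v, v ∈ e₁ ∧ v ∈ e₂) → c e₁ ≠ c e₂

/-- The (2,2,1)-pole `N` obtained from the Petersen graph by removing the path
`u–v–w`: five pendant vertices (indexed by `Fin 5`) are attached at the former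
neighbours `a1, a2` of `u`, `b1, b2` of `w`, and the third neighbour `t` of `v`. -/
def poleN (u v w a1 a2 b1 b2 t : PetersenVert) :
    SimpleGraph ({z : PetersenVert // z ≠ u ∧ z ≠ v ∧ z ≠ w} ⊕ Fin 5) :=
  SimpleGraph.fromRel (fun p q =>
    match p, q with
    | Sum.inl x, Sum.inl y => petersen.Adj x.1 y.1
    | Sum.inl x, Sum.inr k =>
        (k = 0 ∧ x.1 = a1) ∨ (k = 1 ∧ x.1 = a2) ∨ (k = 2 ∧ x.1 = b1) ∨
        (k = 3 ∧ x.1 = b2) ∨ (k = 4 ∧ x.1 = t)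
    | _, _ => False)

/-!
The symmetric group on `Fin 5` acts on the Petersen graph by automorphisms, and every
configuration `u, v, w, a1, a2, b1, b2, t` of the theorem is the image of one standard
configuration, up to exchanging `b1` and `b2`. An automorphism carrying one configuration to
another induces an isomorphism of the corresponding poles fixing the pendant labels (exchanging
`b1` and `b2` only swaps the pendants `2` and `3`), and colourings pull back along such
isomorphisms. So it suffices to treat the standard pole. There an explicit colouring exists, and
in every colouring by the nonzero elements of `Z2 × Z2` the three edges at each of the seven inner
vertices carry the three distinct colours; these seven local conditions already force the
dichotomy, which is a finite check.
-/

def IsRainbow (a b c : ZMod 2 × ZMod 2) : Prop :=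
  a ≠ 0 ∧ b ≠ 0 ∧ c ≠ 0 ∧ a ≠ b ∧ a ≠ c ∧ b ≠ c

def PendantDichotomy (p₀ p₁ p₂ p₃ p₄ : ZMod 2 × ZMod 2) : Prop :=
  Xor (p₀ = p₁ ∧ p₂ ≠ p₃ ∧ p₄ = p₂ + p₃) (p₂ = p₃ ∧ p₀ ≠ p₁ ∧ p₄ = p₀ + p₁)

theorem PendantDichotomy.swap_right {p₀ p₁ p₂ p₃ p₄ : ZMod 2 × ZMod 2}
    (h : PendantDichotomy p₀ p₁ p₂ p₃ p₄) : PendantDichotomy p₀ p₁ p₃ p₂ p₄ := by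
  unfold PendantDichotomy at *
  rwa [eq_comm (a := p₃), ne_comm (a := p₃), add_comm p₃]

/- The seven rainbow conditions are those at the inner vertices `a1, b2, y, b1, a2, x, t` of the
standard pole below; the binders are ordered so that each condition can be tested as soon as its
colours are chosen, which keeps the search done by `decide` small. -/
set_option synthInstance.maxSize 2000 in
theorem pendantDichotomy_of_isRainbow
    {p₀ a1y a1b2 : ZMod 2 × ZMod 2} (hA1 : IsRainbow p₀ a1y a1b2)
    {p₃ b2x : ZMod 2 × ZMod 2} (hB2 : IsRainbow p₃ b2x a1b2)
    {b1y yt : ZMod 2 × ZMod 2} (hY : IsRainbow b1y a1y yt)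
    {p₂ a2b1 : ZMod 2 × ZMod 2} (hB1 : IsRainbow p₂ b1y a2b1)
    {p₁ a2x : ZMod 2 × ZMod 2} (hA2 : IsRainbow p₁ a2x a2b1)
    {xt : ZMod 2 × ZMod 2} (hX : IsRainbow b2x a2x xt)
    {p₄ : ZMod 2 × ZMod 2} (hT : IsRainbow p₄ xt yt) :
    PendantDichotomy p₀ p₁ p₂ p₃ p₄ := by
  revert p₀ a1y a1b2 hA1 p₃ b2x hB2 b1y yt hY p₂ a2b1 hB1 p₁ a2x hA2 xt hX p₄ hT
  unfold IsRainbow PendantDichotomy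
  decide

section EdgeColoring

variable {V W α : Type*} {G : SimpleGraph V} {H : SimpleGraph W}

-- `IsProper3EdgeColoring` and the second conjunct of `IsProperK4EdgeColoring` unfold to this.
def IsProperEdgeColoring (G : SimpleGraph V) (c : Sym2 V → α) : Prop :=
  ∀ e₁ e₂ : Sym2 V, e₁ ∈ G.edgeSet → e₂ ∈ G.edgeSet → e₁ ≠ e₂ →
    (∃ v, v ∈ e₁ ∧ v ∈ e₂) → c e₁ ≠ c e₂

theorem IsProperEdgeColoring.comap (f : G ↪g H) {c : Sym2 W → α}
    (hc : IsProperEdgeColoring H c) : IsProperEdgeColoring G (c ∘ Sym2.map f) := by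
  rintro e₁ e₂ h₁ h₂ hne ⟨v, hv₁, hv₂⟩
  exact hc _ _ (f.toHom.map_mem_edgeSet h₁) (f.toHom.map_mem_edgeSet h₂)
    (fun h => hne (Sym2.map.injective f.injective h))
    ⟨f v, Sym2.mem_map.mpr ⟨v, hv₁, rfl⟩, Sym2.mem_map.mpr ⟨v, hv₂, rfl⟩⟩

theorem ThreeEdgeColorable.of_embedding (f : G ↪g H) (hH : ThreeEdgeColorable H) :
    ThreeEdgeColorable G :=
  let ⟨c, hc⟩ := hH
  ⟨c ∘ Sym2.map f, IsProperEdgeColoring.comap f hc⟩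

theorem IsProperK4EdgeColoring.comap (f : G ↪g H) {c : Sym2 W → ZMod 2 × ZMod 2}
    (hc : IsProperK4EdgeColoring H c) : IsProperK4EdgeColoring G (c ∘ Sym2.map f) :=
  ⟨fun _ he => hc.1 _ (f.toHom.map_mem_edgeSet he), IsProperEdgeColoring.comap f hc.2⟩

theorem IsProperK4EdgeColoring.isRainbow {c : Sym2 V → ZMod 2 × ZMod 2}
    (hc : IsProperK4EdgeColoring G c) (x : V) (e₁ e₂ e₃ : Sym2 V)
    (he : ∀ e ∈ [e₁, e₂, e₃], e ∈ G.edgeSet ∧ x ∈ e) (hne : [e₁, e₂, e₃].Nodup) :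
    IsRainbow (c e₁) (c e₂) (c e₃) := by
  simp only [List.mem_cons, List.not_mem_nil, or_false, forall_eq_or_imp, forall_eq] at he
  obtain ⟨⟨h₁, hx₁⟩, ⟨h₂, hx₂⟩, ⟨h₃, hx₃⟩⟩ := he
  simp only [List.nodup_cons, List.mem_cons, List.not_mem_nil, or_false, not_or] at hne
  obtain ⟨⟨h₁₂, h₁₃⟩, h₂₃, -⟩ := hne
  exact ⟨hc.1 _ h₁, hc.1 _ h₂, hc.1 _ h₃, hc.2 _ _ h₁ h₂ h₁₂ ⟨x, hx₁, hx₂⟩,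
    hc.2 _ _ h₁ h₃ h₁₃ ⟨x, hx₁, hx₃⟩, hc.2 _ _ h₂ h₃ h₂₃ ⟨x, hx₂, hx₃⟩⟩

end EdgeColoring

def petersenAut (σ : Equiv.Perm (Fin 5)) : petersen ≃g petersen where
  toEquiv := σ.finsetCongr.subtypeEquiv fun s => by simp
  map_rel_iff' := Finset.disjoint_map _

@[simp]
theorem coe_petersenAut_apply (σ : Equiv.Perm (Fin 5)) (s : PetersenVert) :
    (petersenAut σ s : Finset (Fin 5)) = (s : Finset (Fin 5)).map σ.toEmbedding :=
  rfl

section PoleN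

variable (u v w a1 a2 b1 b2 t : PetersenVert)

def poleNIso (φ : petersen ≃g petersen) :
    poleN u v w a1 a2 b1 b2 t ≃g poleN (φ u) (φ v) (φ w) (φ a1) (φ a2) (φ b1) (φ b2) (φ t) where
  toEquiv := (φ.toEquiv.subtypeEquiv fun z => by simp [φ.injective.ne_iff]).sumCongr
    (Equiv.refl _)
  map_rel_iff' := by
    rintro (x | k) (y | l) <;> simp [poleN, φ.injective.eq_iff, φ.map_adj_iff, Subtype.val_inj]

def poleNSwapBIso : poleN u v w a1 a2 b1 b2 t ≃g poleN u v w a1 a2 b2 b1 t where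
  toEquiv := (Equiv.refl _).sumCongr (Equiv.swap 2 3)
  map_rel_iff' := by
    rintro (x | k) (y | l) <;>
      simp only [Equiv.sumCongr_apply, Sum.map_inl, Sum.map_inr, Equiv.refl_apply]
    · simp [poleN]
    · simp [poleN, Equiv.swap_apply_eq_iff, Equiv.swap_apply_of_ne_of_ne]
      tauto
    · simp [poleN, Equiv.swap_apply_eq_iff, Equiv.swap_apply_of_ne_of_ne]
      tauto
    · simp [poleN]

end PoleN

instance : DecidableRel petersen.Adj := fun a b => inferInstanceAs (Decidable (Disjoint a.1 b.1))

instance (u v w a1 a2 b1 b2 t : PetersenVert) : DecidableRel (poleN u v w a1 a2 b1 b2 t).Adj := by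
  rintro (x | k) (y | l) <;> exact decidable_of_iff' _ (SimpleGraph.fromRel_adj _ _ _)

-- The labelling of `petersen_labelling` with `xᵢ = i`.
def stdU : PetersenVert := ⟨{2, 3}, rfl⟩
def stdV : PetersenVert := ⟨{0, 1}, rfl⟩
def stdW : PetersenVert := ⟨{2, 4}, rfl⟩
def stdA1 : PetersenVert := ⟨{0, 4}, rfl⟩
def stdA2 : PetersenVert := ⟨{1, 4}, rfl⟩
def stdB1 : PetersenVert := ⟨{0, 3}, rfl⟩
def stdB2 : PetersenVert := ⟨{1, 3}, rfl⟩
def stdT : PetersenVert := ⟨{3, 4}, rfl⟩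

abbrev stdPole := poleN stdU stdV stdW stdA1 stdA2 stdB1 stdB2 stdT

abbrev StdPoleVert := {z : PetersenVert // z ≠ stdU ∧ z ≠ stdV ∧ z ≠ stdW} ⊕ Fin 5

namespace StdPoleVert

def a1 : StdPoleVert := .inl ⟨stdA1, by decide⟩
def a2 : StdPoleVert := .inl ⟨stdA2, by decide⟩
def b1 : StdPoleVert := .inl ⟨stdB1, by decide⟩
def b2 : StdPoleVert := .inl ⟨stdB2, by decide⟩
def t : StdPoleVert := .inl ⟨stdT, by decide⟩
def x : StdPoleVert := .inl ⟨⟨{0, 2}, rfl⟩, by decide⟩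
def y : StdPoleVert := .inl ⟨⟨{1, 2}, rfl⟩, by decide⟩

end StdPoleVert

set_option synthInstance.maxSize 2000 in
open StdPoleVert in
def stdColoring (e : Sym2 StdPoleVert) : Fin 3 :=
  if e = s(b2, .inr 3) ∨ e = s(x, t) ∨ e = s(b1, a2) ∨ e = s(a1, y) then 1
  else if e = s(t, .inr 4) ∨ e = s(x, a2) ∨ e = s(b1, y) ∨ e = s(a1, b2) then 2
  else 0

set_option maxRecDepth 100000 in
set_option synthInstance.maxSize 2000 in
theorem stdColoring_isProper : IsProperEdgeColoring stdPole stdColoring := by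
  unfold IsProperEdgeColoring
  decide

open StdPoleVert in
theorem stdPole_pendantDichotomy {c : Sym2 StdPoleVert → ZMod 2 × ZMod 2}
    (hc : IsProperK4EdgeColoring stdPole c) :
    PendantDichotomy (c s(a1, .inr 0)) (c s(a2, .inr 1)) (c s(b1, .inr 2)) (c s(b2, .inr 3))
      (c s(t, .inr 4)) := by
  refine pendantDichotomy_of_isRainbow
    (hc.isRainbow a1 s(a1, .inr 0) s(a1, y) s(a1, b2) ?_ ?_)
    (hc.isRainbow b2 s(b2, .inr 3) s(x, b2) s(a1, b2) ?_ ?_)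
    (hc.isRainbow y s(b1, y) s(a1, y) s(y, t) ?_ ?_)
    (hc.isRainbow b1 s(b1, .inr 2) s(b1, y) s(b1, a2) ?_ ?_)
    (hc.isRainbow a2 s(a2, .inr 1) s(x, a2) s(b1, a2) ?_ ?_)
    (hc.isRainbow x s(x, b2) s(x, a2) s(x, t) ?_ ?_)
    (hc.isRainbow t s(t, .inr 4) s(x, t) s(y, t) ?_ ?_)
  all_goals decide

/- The quantifiers are interleaved with the hypotheses so that `decide` only enumerates genuine
configurations. -/
set_option maxRecDepth 100000 in
set_option synthInstance.maxSize 5000 in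
theorem petersen_labelling : ∀ u v : PetersenVert, petersen.Adj u v →
    ∀ w, petersen.Adj v w → u ≠ w → ∀ t, petersen.Adj v t → t ≠ u → t ≠ w →
    ∀ a1, petersen.Adj u a1 → a1 ≠ v → ∀ a2, petersen.Adj u a2 → a2 ≠ v → a1 ≠ a2 →
    ∀ b1, petersen.Adj w b1 → b1 ≠ v → ∀ b2, petersen.Adj w b2 → b2 ≠ v → b1 ≠ b2 →
    ∃ x₀ x₁, v.1 = {x₀, x₁} ∧ ∃ x₂ x₃, u.1 = {x₂, x₃} ∧ ∃ x₄, w.1 = {x₂, x₄} ∧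
      t.1 = {x₃, x₄} ∧ a1.1 = {x₀, x₄} ∧ a2.1 = {x₁, x₄} ∧
      (b1.1 = {x₀, x₃} ∧ b2.1 = {x₁, x₃} ∨ b1.1 = {x₁, x₃} ∧ b2.1 = {x₀, x₃}) ∧
      Function.Injective ![x₀, x₁, x₂, x₃, x₄] := by
  decide

theorem exists_perm_eq_petersenAut_std {u v w a1 a2 b1 b2 t : PetersenVert}
    (huv : petersen.Adj u v) (hvw : petersen.Adj v w) (huw : u ≠ w)
    (ha1 : petersen.Adj u a1) (ha2 : petersen.Adj u a2) (ha12 : a1 ≠ a2)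
    (ha1v : a1 ≠ v) (ha2v : a2 ≠ v)
    (hb1 : petersen.Adj w b1) (hb2 : petersen.Adj w b2) (hb12 : b1 ≠ b2)
    (hb1v : b1 ≠ v) (hb2v : b2 ≠ v)
    (ht : petersen.Adj v t) (htu : t ≠ u) (htw : t ≠ w) :
    ∃ σ : Equiv.Perm (Fin 5), u = petersenAut σ stdU ∧ v = petersenAut σ stdV ∧
      w = petersenAut σ stdW ∧ t = petersenAut σ stdT ∧
      a1 = petersenAut σ stdA1 ∧ a2 = petersenAut σ stdA2 ∧
      (b1 = petersenAut σ stdB1 ∧ b2 = petersenAut σ stdB2 ∨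
        b1 = petersenAut σ stdB2 ∧ b2 = petersenAut σ stdB1) := by
  obtain ⟨x₀, x₁, hv, x₂, x₃, hu, x₄, hw, ht', ha1', ha2', hb', hx⟩ :=
    petersen_labelling u v huv w hvw huw t ht htu htw a1 ha1 ha1v a2 ha2 ha2v ha12
      b1 hb1 hb1v b2 hb2 hb2v hb12
  let σ : Equiv.Perm (Fin 5) := Equiv.ofBijective _ hx.bijective_of_finite
  have image : ∀ {z s : PetersenVert} {i j : Fin 5}, s.1 = {i, j} → z.1 = {σ i, σ j} →
      z = petersenAut σ s := fun hs hz => Subtype.ext (by simp [hs, hz])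
  exact ⟨σ, image rfl hu, image rfl hv, image rfl hw, image rfl ht', image rfl ha1',
    image rfl ha2', hb'.imp (fun h => ⟨image rfl h.1, image rfl h.2⟩) (fun h => ⟨image rfl h.1, image rfl h.2⟩)⟩

theorem stdPole_threeEdgeColorable : ThreeEdgeColorable stdPole :=
  ⟨stdColoring, stdColoring_isProper⟩

/-- The pole `N` is colourable, and every proper 3-edge-colouring with colours the
nonzero elements of `Z2 × Z2` satisfies exactly one of: (i) the dangling edges at
`a1, a2` get equal colours, those at `b1, b2` get distinct colours, and the dangling
edge at `t` gets their sum; or (ii) the same with the roles of `a1, a2` and `b1, b2`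
exchanged. -/
theorem poleN_coloring (u v w a1 a2 b1 b2 t : PetersenVert)
    (huv : petersen.Adj u v) (hvw : petersen.Adj v w) (huw : u ≠ w)
    (ha1 : petersen.Adj u a1) (ha2 : petersen.Adj u a2) (ha12 : a1 ≠ a2)
    (ha1v : a1 ≠ v) (ha2v : a2 ≠ v) (ha1w : a1 ≠ w) (ha2w : a2 ≠ w)
    (hb1 : petersen.Adj w b1) (hb2 : petersen.Adj w b2) (hb12 : b1 ≠ b2)
    (hb1v : b1 ≠ v) (hb2v : b2 ≠ v) (hb1u : b1 ≠ u) (hb2u : b2 ≠ u)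
    (ht : petersen.Adj v t) (htu : t ≠ u) (htw : t ≠ w) :
    ThreeEdgeColorable (poleN u v w a1 a2 b1 b2 t) ∧
    ∀ c : Sym2 ({z : PetersenVert // z ≠ u ∧ z ≠ v ∧ z ≠ w} ⊕ Fin 5) → ZMod 2 × ZMod 2,
      IsProperK4EdgeColoring (poleN u v w a1 a2 b1 b2 t) c →
      Xor'
        (c s(Sum.inl ⟨a1, ha1.ne', ha1v, ha1w⟩, Sum.inr 0) =
            c s(Sum.inl ⟨a2, ha2.ne', ha2v, ha2w⟩, Sum.inr 1) ∧
          c s(Sum.inl ⟨b1, hb1u, hb1v, hb1.ne'⟩, Sum.inr 2) ≠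
            c s(Sum.inl ⟨b2, hb2u, hb2v, hb2.ne'⟩, Sum.inr 3) ∧
          c s(Sum.inl ⟨t, htu, ht.ne', htw⟩, Sum.inr 4) =
            c s(Sum.inl ⟨b1, hb1u, hb1v, hb1.ne'⟩, Sum.inr 2) +
              c s(Sum.inl ⟨b2, hb2u, hb2v, hb2.ne'⟩, Sum.inr 3))
        (c s(Sum.inl ⟨b1, hb1u, hb1v, hb1.ne'⟩, Sum.inr 2) =
            c s(Sum.inl ⟨b2, hb2u, hb2v, hb2.ne'⟩, Sum.inr 3) ∧
          c s(Sum.inl ⟨a1, ha1.ne', ha1v, ha1w⟩, Sum.inr 0) ≠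
            c s(Sum.inl ⟨a2, ha2.ne', ha2v, ha2w⟩, Sum.inr 1) ∧
          c s(Sum.inl ⟨t, htu, ht.ne', htw⟩, Sum.inr 4) =
            c s(Sum.inl ⟨a1, ha1.ne', ha1v, ha1w⟩, Sum.inr 0) +
              c s(Sum.inl ⟨a2, ha2.ne', ha2v, ha2w⟩, Sum.inr 1)) := by
  obtain ⟨σ, rfl, rfl, rfl, rfl, rfl, rfl, hb⟩ := exists_perm_eq_petersenAut_std huv hvw huw
    ha1 ha2 ha12 ha1v ha2v hb1 hb2 hb12 hb1v hb2v ht htu htw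
  let f := poleNIso stdU stdV stdW stdA1 stdA2 stdB1 stdB2 stdT (petersenAut σ)
  rcases hb with ⟨rfl, rfl⟩ | ⟨rfl, rfl⟩
  · exact ⟨stdPole_threeEdgeColorable.of_embedding f.symm.toEmbedding,
      fun c hc => stdPole_pendantDichotomy (hc.comap f.toEmbedding)⟩
  · let g := (poleNSwapBIso _ _ _ _ _ _ _ _).comp f
    exact ⟨stdPole_threeEdgeColorable.of_embedding g.symm.toEmbedding,
      fun c hc => (stdPole_pendantDichotomy (hc.comap g.toEmbedding)).swap_right⟩
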